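/- arXiv:2003.03045 — 3 statements merged into one kernel-verified Lean document; each statement's English description precedes it below -/
import Mathlib

section
/- Let Q̄ be a positive semidefinite matrix, R̄ and S̄ positive definite matrices, and B, C matrices of compatible dimensions. If S̄ − Cᵀ Q̄ C is positive definite, then the Schur-complement-type matrix Bᵀ Q̄ B + R̄ − Bᵀ Q̄ C (Cᵀ Q̄ C − S̄)⁻¹ Cᵀ Q̄ B is positive definite. -/
open Matrix

theorem stmt_0 {p m l : Type*} [Fintype p] [Fintype m] [Fintype l]
    [DecidableEq p] [DecidableEq m] [DecidableEq l]
    (Q : Matrix p p ℝ) (B : Matrix p m ℝ) (C : Matrix p l ℝ)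
    (R : Matrix m m ℝ) (S : Matrix l l ℝ)
    (hQ : Q.PosSemidef) (hR : R.PosDef) (hS : S.PosDef)
    (h : (S - Cᵀ * Q * C).PosDef) :
    (Bᵀ * Q * B + R - Bᵀ * Q * C * (Cᵀ * Q * C - S)⁻¹ * (Cᵀ * Q * B)).PosDef := by
  have hdet : IsUnit (S - Cᵀ * Q * C).det := isUnit_iff_ne_zero.mpr (ne_of_gt h.det_pos)
  have hinv : (Cᵀ * Q * C - S)⁻¹ = -((S - Cᵀ * Q * C)⁻¹) := by
    rw [show Cᵀ * Q * C - S = -(S - Cᵀ * Q * C) from (neg_sub _ _).symm]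
    refine Matrix.inv_eq_left_inv ?_
    rw [Matrix.neg_mul, Matrix.mul_neg, neg_neg, Matrix.nonsing_inv_mul _ hdet]
  have e : (Bᵀ * Q * C)ᴴ = Cᵀ * Q * B := by
    rw [conjTranspose_mul, conjTranspose_mul, hQ.isHermitian.eq,
      conjTranspose_eq_transpose_of_trivial, conjTranspose_eq_transpose_of_trivial,
      transpose_transpose, Matrix.mul_assoc]
  have h1 : (Bᵀ * Q * C * (S - Cᵀ * Q * C)⁻¹ * (Cᵀ * Q * B)).PosSemidef := by
    have := h.inv.posSemidef.mul_mul_conjTranspose_same (Bᵀ * Q * C)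
    rwa [e] at this
  have h2 : (Bᵀ * Q * B).PosSemidef := by
    have := hQ.mul_mul_conjTranspose_same Bᵀ
    rwa [conjTranspose_eq_transpose_of_trivial, transpose_transpose] at this
  have hgoal : Bᵀ * Q * B + R - Bᵀ * Q * C * (Cᵀ * Q * C - S)⁻¹ * (Cᵀ * Q * B)
      = (Bᵀ * Q * B + Bᵀ * Q * C * (S - Cᵀ * Q * C)⁻¹ * (Cᵀ * Q * B)) + R := by
    rw [hinv, Matrix.mul_neg, Matrix.neg_mul, sub_neg_eq_add]; abel
  rw [hgoal]
  exact Matrix.PosDef.posSemidef_add (h2.add h1) hR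
end

section
/- Let Q̄ ⪰ 0, R̄ ≻ 0, S̄ ≻ 0 with S̄ − Cᵀ Q̄ C ≻ 0. Then the block matrix T = [[Bᵀ Q̄ B + R̄, Bᵀ Q̄ C], [Cᵀ Q̄ B, Cᵀ Q̄ C − S̄]] is invertible. -/
open Matrix

theorem stmt_1 {p m l : Type*} [Fintype p] [Fintype m] [Fintype l]
    [DecidableEq p] [DecidableEq m] [DecidableEq l]
    (Q : Matrix p p ℝ) (B : Matrix p m ℝ) (C : Matrix p l ℝ)
    (R : Matrix m m ℝ) (S : Matrix l l ℝ)
    (hQ : Q.PosSemidef) (hR : R.PosDef) (hS : S.PosDef)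
    (h : (S - Cᵀ * Q * C).PosDef) :
    IsUnit (Matrix.fromBlocks (Bᵀ * Q * B + R) (Bᵀ * Q * C)
      (Cᵀ * Q * B) (Cᵀ * Q * C - S)) := by
  set E := S - Cᵀ * Q * C with hE
  have hD : Cᵀ * Q * C - S = -E := (neg_sub _ _).symm
  have hDu : IsUnit (Cᵀ * Q * C - S) := by
    rw [hD, ← neg_one_smul ℝ E]
    exact (h.isUnit.smul (-1 : ℝˣ))
  haveI : Invertible (Cᵀ * Q * C - S) := hDu.invertible
  rw [isUnit_iff_isUnit_det, det_fromBlocks₂₂]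
  have hQt : Qᵀ = Q := hQ.isHermitian
  have hinv : ⅟ (Cᵀ * Q * C - S) = -E⁻¹ := by
    rw [invOf_eq_nonsing_inv, hD]
    refine inv_eq_right_inv ?_
    rw [Matrix.neg_mul, Matrix.mul_neg, neg_neg, Matrix.mul_nonsing_inv _
      (isUnit_iff_isUnit_det _ |>.1 h.isUnit)]
  have hSchur : (Bᵀ * Q * B + R - Bᵀ * Q * C * ⅟ (Cᵀ * Q * C - S) * (Cᵀ * Q * B)).PosDef := by
    rw [hinv]
    have key : Bᵀ * Q * B + R - Bᵀ * Q * C * -E⁻¹ * (Cᵀ * Q * B)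
        = (Bᵀ * Q * B + (Cᵀ * Q * B)ᵀ * E⁻¹ * (Cᵀ * Q * B)) + R := by
      have : (Cᵀ * Q * B)ᵀ = Bᵀ * Q * C := by
        rw [transpose_mul, transpose_mul, transpose_transpose, hQt, Matrix.mul_assoc]
      rw [this]
      rw [Matrix.mul_neg, Matrix.neg_mul, sub_neg_eq_add]
      abel
    rw [key]
    refine Matrix.PosDef.posSemidef_add ?_ hR
    refine (hQ.conjTranspose_mul_mul_same B).add ?_
    have := h.inv.posSemidef.conjTranspose_mul_mul_same (Cᵀ * Q * B)
    simpa using this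
  exact ((hDu.map (detMonoidHom)).mul hSchur.det_pos.ne'.isUnit)
end

section
/- Let J(u,v) = (Aμ + Bu + Cv)ᵀ Q̄ (Aμ + Bu + Cv) + uᵀ R̄ u − vᵀ S̄ v with Q̄ ⪰ 0, R̄ ≻ 0, S̄ ≻ 0, S̄ − Cᵀ Q̄ C ≻ 0. Then (u*, v*) defined by the unique solution of the linear system [[Bᵀ Q̄ B + R̄, Bᵀ Q̄ C],[Cᵀ Q̄ B, Cᵀ Q̄ C − S̄]] (u*, v*) = −(Bᵀ Q̄ A μ, Cᵀ Q̄ A μ) is a saddle point of J: for all u, v we have J(u*, v) ≤ J(u*, v*) ≤ J(u, v*). -/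
open Matrix

private lemma sym_dot {p : Type*} [Fintype p] {M : Matrix p p ℝ} (hM : Mᵀ = M)
    (x y : p → ℝ) : x ⬝ᵥ M *ᵥ y = y ⬝ᵥ M *ᵥ x := by
  calc x ⬝ᵥ M *ᵥ y = (x ᵥ* M) ⬝ᵥ y := dotProduct_mulVec _ _ _
    _ = (Mᵀ *ᵥ x) ⬝ᵥ y := by rw [mulVec_transpose]
    _ = (M *ᵥ x) ⬝ᵥ y := by rw [hM]
    _ = y ⬝ᵥ M *ᵥ x := dotProduct_comm _ _

private lemma quad_expand {p : Type*} [Fintype p] {M : Matrix p p ℝ} (hM : Mᵀ = M)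
    (x y : p → ℝ) :
    (x + y) ⬝ᵥ M *ᵥ (x + y) = x ⬝ᵥ M *ᵥ x + 2 * (y ⬝ᵥ M *ᵥ x) + y ⬝ᵥ M *ᵥ y := by
  rw [mulVec_add, dotProduct_add, add_dotProduct, add_dotProduct, sym_dot hM x y]
  ring

theorem stmt_3 {n p m l : Type*} [Fintype n] [Fintype p] [Fintype m] [Fintype l]
    (μ : n → ℝ) (A : Matrix p n ℝ) (B : Matrix p m ℝ) (C : Matrix p l ℝ)
    (Q : Matrix p p ℝ) (R : Matrix m m ℝ) (S : Matrix l l ℝ)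
    (hQ : Q.PosSemidef) (hR : R.PosDef) (hS : S.PosDef)
    (h : (S - Cᵀ * Q * C).PosDef)
    (J : (m → ℝ) → (l → ℝ) → ℝ)
    (hJ : ∀ u v, J u v =
      (A *ᵥ μ + B *ᵥ u + C *ᵥ v) ⬝ᵥ Q *ᵥ (A *ᵥ μ + B *ᵥ u + C *ᵥ v)
        + u ⬝ᵥ R *ᵥ u - v ⬝ᵥ S *ᵥ v)
    (ustar : m → ℝ) (vstar : l → ℝ)
    (h1 : (Bᵀ * Q * B + R) *ᵥ ustar + (Bᵀ * Q * C) *ᵥ vstar = -((Bᵀ * Q * A) *ᵥ μ))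
    (h2 : (Cᵀ * Q * B) *ᵥ ustar + (Cᵀ * Q * C - S) *ᵥ vstar = -((Cᵀ * Q * A) *ᵥ μ)) :
    ∀ u v, J ustar v ≤ J ustar vstar ∧ J ustar vstar ≤ J u vstar := by
  have hQs : Qᵀ = Q := by simpa [Matrix.IsSymm] using hQ.1
  have hRs : Rᵀ = R := by simpa [Matrix.IsSymm] using hR.1
  have hSs : Sᵀ = S := by simpa [Matrix.IsSymm] using hS.1
  set w : p → ℝ := A *ᵥ μ + B *ᵥ ustar + C *ᵥ vstar with hw
  have e1 : (Bᵀ * Q) *ᵥ w = -(R *ᵥ ustar) := by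
    have h1' : (Bᵀ * Q) *ᵥ (B *ᵥ ustar) + R *ᵥ ustar + (Bᵀ * Q) *ᵥ (C *ᵥ vstar)
        = -((Bᵀ * Q) *ᵥ (A *ᵥ μ)) := by
      simpa [add_mulVec, mulVec_mulVec, Matrix.mul_assoc] using h1
    rw [hw, mulVec_add, mulVec_add]
    linear_combination h1'
  have e2 : (Cᵀ * Q) *ᵥ w = S *ᵥ vstar := by
    have h2' : (Cᵀ * Q) *ᵥ (B *ᵥ ustar) + ((Cᵀ * Q) *ᵥ (C *ᵥ vstar) - S *ᵥ vstar)
        = -((Cᵀ * Q) *ᵥ (A *ᵥ μ)) := by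
      simpa [add_mulVec, sub_mulVec, mulVec_mulVec, Matrix.mul_assoc] using h2
    rw [hw, mulVec_add, mulVec_add]
    linear_combination h2'
  intro u v
  constructor
  · -- J ustar v ≤ J ustar vstar
    set e : l → ℝ := v - vstar with he
    have hv : v = vstar + e := by rw [he]; abel
    have harg : A *ᵥ μ + B *ᵥ ustar + C *ᵥ v = w + C *ᵥ e := by
      rw [hw, hv, mulVec_add]; abel
    have hcross : (C *ᵥ e) ⬝ᵥ Q *ᵥ w = e ⬝ᵥ S *ᵥ vstar := by
      rw [dotProduct_mulVec, ← vecMul_transpose C e, vecMul_vecMul, ← dotProduct_mulVec, e2]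
    have key : J ustar v = J ustar vstar - e ⬝ᵥ (S - Cᵀ * Q * C) *ᵥ e := by
      rw [hJ, hJ, harg, quad_expand hQs, hv, quad_expand hSs, hcross]
      have : (C *ᵥ e) ⬝ᵥ Q *ᵥ (C *ᵥ e) = e ⬝ᵥ (Cᵀ * Q * C) *ᵥ e := by
        rw [dotProduct_mulVec, ← vecMul_transpose C e, vecMul_vecMul, ← dotProduct_mulVec,
          mulVec_vecMul, transpose_transpose]
      rw [sub_mulVec, dotProduct_sub, this]
      ring
    have := (h.posSemidef).dotProduct_mulVec_nonneg e
    simp only [star_trivial] at this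
    linarith [key, this]
  · -- J ustar vstar ≤ J u vstar
    set d : m → ℝ := u - ustar with hd
    have hu : u = ustar + d := by rw [hd]; abel
    have harg : A *ᵥ μ + B *ᵥ u + C *ᵥ vstar = w + B *ᵥ d := by
      rw [hw, hu, mulVec_add]; abel
    have hcross : (B *ᵥ d) ⬝ᵥ Q *ᵥ w = -(d ⬝ᵥ R *ᵥ ustar) := by
      rw [dotProduct_mulVec, ← vecMul_transpose B d, vecMul_vecMul, ← dotProduct_mulVec, e1,
        dotProduct_neg]
    have hBd : (B *ᵥ d) ⬝ᵥ Q *ᵥ (B *ᵥ d) = d ⬝ᵥ (Bᵀ * Q * B) *ᵥ d := by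
      rw [dotProduct_mulVec, ← vecMul_transpose B d, vecMul_vecMul, ← dotProduct_mulVec,
        mulVec_vecMul, transpose_transpose]
    have key : J u vstar = J ustar vstar + d ⬝ᵥ (Bᵀ * Q * B) *ᵥ d + d ⬝ᵥ R *ᵥ d := by
      rw [hJ, hJ, harg, quad_expand hQs, hu, quad_expand hRs, hcross, hBd]
      ring
    have hq : (0:ℝ) ≤ d ⬝ᵥ (Bᵀ * Q * B) *ᵥ d := by
      have := (hQ.conjTranspose_mul_mul_same B).dotProduct_mulVec_nonneg d
      simpa using this
    have hr : (0:ℝ) ≤ d ⬝ᵥ R *ᵥ d := by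
      have := hR.posSemidef.dotProduct_mulVec_nonneg d
      simpa using this
    linarith
end
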